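/- arXiv:1602.04561 — 8 statements merged into one kernel-verified Lean document; each statement's English description precedes it below -/
import Mathlib

section
/- For every natural number ℓ, every family n : Fin (ℓ+1) → ℕ, and every k with 0 ≤ k ≤ ℓ+1, Σ_{I ⊆ Fin(ℓ+1), |I| = k} (∏_{i ∈ I} n_i)·(∏_{j ∉ I} (n_j + 1)) = Σ_{p=k}^{ℓ+1} C(p,k)·S_p(n), where C(p,k) is the binomial coefficient and S_p(n) = Σ_{I ⊆ Fin(ℓ+1), |I| = p} ∏_{i ∈ I} n_i is the elementary symmetric polynomial of degree p. -/
/-!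
Expanding `∏_{j ∉ I} (n_j + 1)` writes the left-hand side as a sum of `∏_{i ∈ P} n_i` over all
pairs `I ⊆ P` with `|I| = k`. Grouping by `P`, each `P` occurs `C(|P|, k)` times, and grouping
the `P` by their size `p` gives `∑_p C(p, k) S_p(n)`; the terms with `p < k` vanish.
-/

open Finset

namespace Finset

variable {ι R : Type*} [DecidableEq ι] [CommSemiring R]

theorem prod_mul_prod_sdiff_add_one {s I : Finset ι} (hI : I ⊆ s) (f : ι → R) :
    (∏ i ∈ I, f i) * ∏ j ∈ s \ I, (f j + 1) = ∑ P ∈ Icc I s, ∏ i ∈ P, f i := by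
  have hdisj {J : Finset ι} (hJ : J ∈ (s \ I).powerset) : Disjoint I J :=
    disjoint_of_subset_right (mem_powerset.1 hJ) disjoint_sdiff
  rw [prod_add_one, mul_sum, Icc_eq_image_powerset hI, sum_image]
  · exact sum_congr rfl fun J hJ => (prod_union (hdisj hJ)).symm
  · intro J hJ J' hJ' h
    rw [← union_sdiff_cancel_left (hdisj hJ), ← union_sdiff_cancel_left (hdisj hJ')]
    exact congrArg (· \ I) h

theorem sum_powersetCard_sum_Icc (s : Finset ι) (k : ℕ) (F : Finset ι → R) :
    ∑ I ∈ s.powersetCard k, ∑ P ∈ Icc I s, F P = ∑ P ∈ s.powerset, (#P).choose k * F P := by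
  rw [sum_comm' (t' := s.powerset) (s' := powersetCard k)]
  · simp only [sum_const, card_powersetCard, nsmul_eq_mul]
  · intro I P
    simp only [mem_powersetCard, mem_Icc, mem_powerset]
    constructor
    · rintro ⟨⟨-, hk⟩, hIP, hPs⟩
      exact ⟨⟨hIP, hk⟩, hPs⟩
    · rintro ⟨⟨hIP, hk⟩, hPs⟩
      exact ⟨⟨hIP.trans hPs, hk⟩, hIP, hPs⟩

theorem sum_powersetCard_prod_mul_prod_sdiff_add_one (s : Finset ι) (k : ℕ) (f : ι → R) :
    ∑ I ∈ s.powersetCard k, (∏ i ∈ I, f i) * ∏ j ∈ s \ I, (f j + 1) =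
      ∑ p ∈ range (#s + 1), p.choose k * ∑ P ∈ s.powersetCard p, ∏ i ∈ P, f i := by
  calc ∑ I ∈ s.powersetCard k, (∏ i ∈ I, f i) * ∏ j ∈ s \ I, (f j + 1)
      = ∑ I ∈ s.powersetCard k, ∑ P ∈ Icc I s, ∏ i ∈ P, f i :=
        sum_congr rfl fun I hI => prod_mul_prod_sdiff_add_one (mem_powersetCard.1 hI).1 f
    _ = ∑ P ∈ s.powerset, (#P).choose k * ∏ i ∈ P, f i := sum_powersetCard_sum_Icc s k _
    _ = ∑ p ∈ range (#s + 1), p.choose k * ∑ P ∈ s.powersetCard p, ∏ i ∈ P, f i := by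
        rw [sum_powerset]
        refine sum_congr rfl fun p _ => ?_
        rw [mul_sum]
        exact sum_congr rfl fun P hP => by rw [(mem_powersetCard.1 hP).2]

end Finset

theorem stmt_1_general (ℓ : ℕ) (n : Fin (ℓ + 1) → ℕ) (k : ℕ) :
    ∑ I ∈ Finset.powersetCard k (Finset.univ : Finset (Fin (ℓ + 1))),
        (∏ i ∈ I, n i) * ∏ j ∈ Iᶜ, (n j + 1) =
      ∑ p ∈ Finset.Icc k (ℓ + 1),
        Nat.choose p k *
          ∑ I ∈ Finset.powersetCard p (Finset.univ : Finset (Fin (ℓ + 1))),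
            ∏ i ∈ I, n i := by
  simp only [compl_eq_univ_sdiff]
  rw [sum_powersetCard_prod_mul_prod_sdiff_add_one, card_univ, Fintype.card_fin]
  refine (sum_subset (fun p hp => mem_range.2 (Nat.lt_succ_of_le (mem_Icc.1 hp).2))
    fun p hp hpk => ?_).symm
  have hlt : p < k := by
    rw [mem_range] at hp
    rw [mem_Icc] at hpk
    omega
  rw [Nat.choose_eq_zero_of_lt hlt, Nat.cast_zero, zero_mul]

/-- The number of `k`-dimensional elementary cubes of the cubical complex
`CL~(n)` equals `∑_{p=k}^{ℓ+1} C(p,k) S_p(n)`. -/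
theorem stmt_1 (ℓ : ℕ) (n : Fin (ℓ + 1) → ℕ) (k : ℕ) (hk : k ≤ ℓ + 1) :
    ∑ I ∈ Finset.powersetCard k (Finset.univ : Finset (Fin (ℓ + 1))),
        (∏ i ∈ I, n i) * ∏ j ∈ Iᶜ, (n j + 1) =
      ∑ p ∈ Finset.Icc k (ℓ + 1),
        Nat.choose p k *
          ∑ I ∈ Finset.powersetCard p (Finset.univ : Finset (Fin (ℓ + 1))),
            ∏ i ∈ I, n i :=
  stmt_1_general ℓ n k
end

section
/- For every natural number ℓ ≥ 1 and every family n : Fin (ℓ+1) → ℕ, Σ_{I ⊆ Fin(ℓ+1), |I| = ℓ} (∏_{i ∈ I} n_i)·(∏_{j ∉ I} (n_j + 1)) − ∏_{i=0}^{ℓ} n_i = ℓ·S_{ℓ+1}(n) + S_ℓ(n), where S_p(n) is the elementary symmetric polynomial of degree p in the n_i. Equivalently, the number of ℓ-cells minus the number of (ℓ+1)-cells of the cubical complex CL~(n) equals ℓ·S_{ℓ+1}(n) + S_ℓ(n). -/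
open Finset

lemma sum_powersetCard_compl {ℓ : ℕ} (f : Finset (Fin (ℓ + 1)) → ℕ) :
    ∑ I ∈ Finset.powersetCard ℓ (Finset.univ : Finset (Fin (ℓ + 1))), f I =
      ∑ j : Fin (ℓ + 1), f ({j}ᶜ) := by
  have step : ∑ I ∈ Finset.powersetCard ℓ (Finset.univ : Finset (Fin (ℓ + 1))), f I =
      ∑ J ∈ Finset.powersetCard 1 (Finset.univ : Finset (Fin (ℓ + 1))), f Jᶜ := by
    refine Finset.sum_nbij' (fun I => Iᶜ) (fun J => Jᶜ) ?_ ?_ ?_ ?_ ?_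
    · intro I hI
      rw [Finset.mem_powersetCard_univ] at *
      rw [Finset.card_compl, hI, Fintype.card_fin]; omega
    · intro J hJ
      rw [Finset.mem_powersetCard_univ] at *
      rw [Finset.card_compl, hJ, Fintype.card_fin]; omega
    · intro I _; simp
    · intro J _; simp
    · intro I _; simp
  rw [step, Finset.powersetCard_one, Finset.sum_map]
  rfl

/-- The number of `ℓ`-cells minus the number of `(ℓ+1)`-cells of the cubical
complex `CL~(n)` equals `ℓ·S_{ℓ+1}(n) + S_ℓ(n)`. -/
theorem stmt_2 (ℓ : ℕ) (hℓ : 1 ≤ ℓ) (n : Fin (ℓ + 1) → ℕ) :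
    ((∑ I ∈ Finset.powersetCard ℓ (Finset.univ : Finset (Fin (ℓ + 1))),
        (∏ i ∈ I, n i) * ∏ j ∈ Iᶜ, (n j + 1) : ℕ) : ℤ) - (∏ i, n i : ℕ) =
      (ℓ : ℤ) * (∑ I ∈ Finset.powersetCard (ℓ + 1) (Finset.univ : Finset (Fin (ℓ + 1))),
            ∏ i ∈ I, n i : ℕ) +
        (∑ I ∈ Finset.powersetCard ℓ (Finset.univ : Finset (Fin (ℓ + 1))),
            ∏ i ∈ I, n i : ℕ) := by
  have hcard : (Finset.univ : Finset (Fin (ℓ + 1))).card = ℓ + 1 := by simp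
  have h1 : (Finset.powersetCard (ℓ + 1) (Finset.univ : Finset (Fin (ℓ + 1)))) =
      {Finset.univ} := by
    simpa [hcard] using Finset.powersetCard_self (Finset.univ : Finset (Fin (ℓ + 1)))
  rw [h1, Finset.sum_singleton,
    sum_powersetCard_compl (fun I => (∏ i ∈ I, n i) * ∏ j ∈ Iᶜ, (n j + 1)),
    sum_powersetCard_compl (fun I => ∏ i ∈ I, n i)]
  have key : ∀ j : Fin (ℓ + 1),
      (∏ i ∈ ({j}ᶜ : Finset (Fin (ℓ+1))), n i) * ∏ k ∈ ({j}ᶜ : Finset (Fin (ℓ+1)))ᶜ, (n k + 1)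
        = (∏ i, n i) + ∏ i ∈ ({j}ᶜ : Finset (Fin (ℓ+1))), n i := by
    intro j
    rw [compl_compl, Finset.prod_singleton, Nat.mul_add, Nat.mul_one,
      ← Finset.prod_compl_mul_prod ({j}ᶜ : Finset (Fin (ℓ+1))) n, compl_compl,
      Finset.prod_singleton, Nat.mul_comm (n j)]
  rw [Finset.sum_congr rfl (fun j _ => key j), Finset.sum_add_distrib, Finset.sum_const,
    Finset.card_univ, Fintype.card_fin, smul_eq_mul]
  push_cast
  ring
end

section
/- Let m ≥ 1 and 1 ≤ N ≤ m be natural numbers, let μ be the product over Fin m of the uniform probability measure on [0,1] ⊂ ℝ, and let 𝔖 be a nonempty family of subsets of Fin m each of cardinality N. Then the expectation under μ of the function ω ↦ min_{S ∈ 𝔖} Σ_{i ∈ S} ω(i) is at least Σ_{k=1}^{N} k/(m+1) = N(N+1)/(2(m+1)). -/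
/-!
For `S ∈ 𝔖` and weights in `[0, 1]`, the layer-cake formula gives
`∑_{i ∈ S} ω i = ∫₀¹ #{i ∈ S | t < ω i} dt ≥ ∫₀¹ (N - C_t ω)⁺ dt`, where `C_t ω = #{i | ω i ≤ t}`.
The right-hand side no longer depends on `S`, so it also bounds the minimum over `𝔖`.
After taking expectations and swapping the integrals, `C_t` is binomial with parameters `m`
and `t`, and the Beta integral `∫₀¹ C(m, k) t^k (1 - t)^(m - k) dt = 1 / (m + 1)` turns the bound into
`∑_{k=0}^m (N - k)⁺ / (m + 1) = ∑_{k=1}^N k / (m + 1)`.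
-/

open MeasureTheory Finset
open scoped ENNReal Nat

theorem sum_range_tsub_eq_sum_Icc {m N : ℕ} (hN : N ≤ m) :
    ∑ k ∈ range (m + 1), (N - k) = ∑ k ∈ Icc 1 N, k := by
  rw [← sum_range_add_sum_Ico _ (by omega : N + 1 ≤ m + 1),
    sum_eq_zero (s := Ico _ _) fun k hk => by simp at hk; omega, add_zero]
  have := sum_range_reflect id (N + 1)
  simp only [id, add_tsub_cancel_right] at this
  rw [this, range_eq_Ico, sum_eq_sum_Ico_succ_bot (by omega), zero_add]
  rfl

theorem sum_Icc_one_natCast (N : ℕ) : ∑ k ∈ Icc 1 N, (k : ℝ) = N * (N + 1) / 2 := by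
  induction N with
  | zero => simp
  | succ n ih =>
    rw [sum_Icc_succ_top (by omega), ih]
    push_cast; ring

/-- Integrate the derivative of `x ^ (a + 1) * (1 - x) ^ (b + 1)`, which vanishes at `0` and `1`. -/
theorem integral_pow_mul_one_sub_pow_succ (a b : ℕ) :
    (a + 1 : ℝ) * ∫ x in (0 : ℝ)..1, x ^ a * (1 - x) ^ (b + 1) =
      (b + 1) * ∫ x in (0 : ℝ)..1, x ^ (a + 1) * (1 - x) ^ b := by
  have hderiv (x : ℝ) : HasDerivAt (fun x : ℝ => x ^ (a + 1) * (1 - x) ^ (b + 1))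
      ((a + 1) * (x ^ a * (1 - x) ^ (b + 1)) - (b + 1) * (x ^ (a + 1) * (1 - x) ^ b)) x := by
    refine ((hasDerivAt_pow (a + 1) x).fun_mul
      (((hasDerivAt_id x).const_sub 1).fun_pow (b + 1))).congr_deriv ?_
    simp only [id, add_tsub_cancel_right, Nat.cast_add, Nat.cast_one]
    ring
  have hftc := intervalIntegral.integral_eq_sub_of_hasDerivAt (a := 0) (b := 1)
    (fun x _ => hderiv x) (by apply Continuous.intervalIntegrable; fun_prop)
  rw [intervalIntegral.integral_sub (by apply Continuous.intervalIntegrable; fun_prop)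
    (by apply Continuous.intervalIntegrable; fun_prop), intervalIntegral.integral_const_mul,
    intervalIntegral.integral_const_mul] at hftc
  simp only [one_pow, sub_self, ne_eq, add_eq_zero, one_ne_zero, and_false, not_false_eq_true,
    zero_pow, mul_zero, zero_sub] at hftc
  linarith

theorem integral_pow_mul_one_sub_pow (a b : ℕ) :
    ∫ x in (0 : ℝ)..1, x ^ a * (1 - x) ^ b = a ! * b ! / (a + b + 1)! := by
  induction b generalizing a with
  | zero => simp [integral_pow, Nat.factorial_succ]; field_simp
  | succ b ih =>
    have h := integral_pow_mul_one_sub_pow_succ a b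
    rw [ih, show a + 1 + b + 1 = a + (b + 1) + 1 by ring] at h
    have : (a + 1 : ℝ) ≠ 0 := by positivity
    rw [← mul_right_inj' this, h]
    push_cast [Nat.factorial_succ]
    field_simp

theorem lintegral_choose_mul_pow_mul_one_sub_pow {n k : ℕ} (hk : k ≤ n) :
    ∫⁻ t in Set.Icc (0 : ℝ) 1,
        n.choose k * ENNReal.ofReal t ^ k * ENNReal.ofReal (1 - t) ^ (n - k) =
      (n + 1 : ℝ≥0∞)⁻¹ := by
  have hcongr : ∀ t ∈ Set.Icc (0 : ℝ) 1,
      n.choose k * ENNReal.ofReal t ^ k * ENNReal.ofReal (1 - t) ^ (n - k) =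
        ENNReal.ofReal (n.choose k * (t ^ k * (1 - t) ^ (n - k))) := fun t ht => by
    rw [ENNReal.ofReal_mul (by positivity), ENNReal.ofReal_mul (pow_nonneg ht.1 k),
      ENNReal.ofReal_pow ht.1, ENNReal.ofReal_pow (by linarith [ht.2]), ENNReal.ofReal_natCast,
      mul_assoc]
  rw [setLIntegral_congr_fun measurableSet_Icc hcongr, ← ofReal_integral_eq_lintegral_ofReal
    (Continuous.integrableOn_Icc (by fun_prop)) ((ae_restrict_iff' measurableSet_Icc).2
      (.of_forall fun t ht => mul_nonneg (by positivity)
        (mul_nonneg (pow_nonneg ht.1 k) (pow_nonneg (by linarith [ht.2]) _)))),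
    integral_Icc_eq_integral_Ioc, ← intervalIntegral.integral_of_le zero_le_one,
    intervalIntegral.integral_const_mul, integral_pow_mul_one_sub_pow,
    show k + (n - k) + 1 = n + 1 by omega]
  have hchoose : (n.choose k * (k ! * (n - k)!) : ℝ) = n ! := by
    exact_mod_cast (mul_assoc _ _ _).symm.trans (Nat.choose_mul_factorial_mul_factorial hk)
  rw [mul_div_assoc', hchoose, Nat.factorial_succ, Nat.cast_mul,
    div_mul_cancel_right₀ (by positivity), ENNReal.ofReal_inv_of_pos (by positivity),
    ENNReal.ofReal_natCast, Nat.cast_succ]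

section Binomial

variable {ι α : Type*} [Fintype ι] (p : α → Prop) [DecidablePred p]

theorem setOf_filter_eq_pi [DecidableEq ι] (A : Finset ι) :
    {ω : ι → α | ({i | p (ω i)} : Finset ι) = A} =
      Set.univ.pi fun i => if i ∈ A then {x | p x} else {x | p x}ᶜ := by
  ext ω
  simp only [Set.mem_ofPred_eq, Set.mem_univ_pi, Finset.ext_iff, mem_filter, mem_univ, true_and]
  refine forall_congr' fun i => ?_
  by_cases hi : i ∈ A <;> simp [hi]

variable [MeasurableSpace α] (ν : Measure α) [SigmaFinite ν]

theorem pi_setOf_filter_eq (A : Finset ι) :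
    Measure.pi (fun _ : ι => ν) {ω | ({i | p (ω i)} : Finset ι) = A} =
      ν {x | p x} ^ #A * ν {x | ¬ p x} ^ (Fintype.card ι - #A) := by
  classical
  rw [setOf_filter_eq_pi, Measure.pi_pi]
  simp [apply_ite, prod_ite, filter_not, card_univ_sdiff, Set.compl_ofPred]

theorem lintegral_comp_card_filter (hp : MeasurableSet {x | p x}) (g : ℕ → ℝ≥0∞) :
    ∫⁻ ω, g (#{i | p (ω i)}) ∂Measure.pi (fun _ : ι => ν) =
      ∑ k ∈ range (Fintype.card ι + 1), (Fintype.card ι).choose k *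
        ν {x | p x} ^ k * ν {x | ¬ p x} ^ (Fintype.card ι - k) * g k := by
  classical
  have hmeas (A : Finset ι) : MeasurableSet {ω : ι → α | ({i | p (ω i)} : Finset ι) = A} := by
    rw [setOf_filter_eq_pi]
    exact MeasurableSet.univ_pi fun i => by split_ifs; exacts [hp, hp.compl]
  have hsplit (ω : ι → α) : g (#{i | p (ω i)}) =
      ∑ A, {ω' : ι → α | ({i | p (ω' i)} : Finset ι) = A}.indicator (fun _ => g #A) ω := by
    simp [Set.indicator_apply]
  simp_rw [hsplit]
  rw [lintegral_finsetSum _ fun A _ => measurable_const.indicator (hmeas A)]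
  simp_rw [lintegral_indicator_const (hmeas _), pi_setOf_filter_eq]
  rw [← powerset_univ, sum_powerset_apply_card
    (fun k => g k * (ν {x | p x} ^ k * ν {x | ¬ p x} ^ (Fintype.card ι - k))), card_univ]
  simp only [nsmul_eq_mul]
  exact sum_congr rfl fun k _ => by ring

end Binomial

section Uniform

theorem volume_restrict_Icc_Iic {t : ℝ} (ht : t ∈ Set.Icc (0 : ℝ) 1) :
    volume.restrict (Set.Icc (0 : ℝ) 1) (Set.Iic t) = ENNReal.ofReal t := by
  rw [Measure.restrict_apply measurableSet_Iic,
    show Set.Iic t ∩ Set.Icc 0 1 = Set.Icc 0 t by ext; simp; grind, Real.volume_Icc, sub_zero]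

theorem volume_restrict_Icc_Ioi {t : ℝ} (ht : t ∈ Set.Icc (0 : ℝ) 1) :
    volume.restrict (Set.Icc (0 : ℝ) 1) (Set.Ioi t) = ENNReal.ofReal (1 - t) := by
  rw [Measure.restrict_apply measurableSet_Ioi,
    show Set.Ioi t ∩ Set.Icc 0 1 = Set.Ioc t 1 by ext; simp; grind, Real.volume_Ioc]

theorem volume_restrict_Icc_Iio_le (x : ℝ) :
    volume.restrict (Set.Icc (0 : ℝ) 1) (Set.Iio x) ≤ ENNReal.ofReal x := by
  rw [Measure.restrict_apply measurableSet_Iio]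
  calc volume (Set.Iio x ∩ Set.Icc 0 1) ≤ volume (Set.Ico 0 x) :=
        measure_mono fun y hy => ⟨hy.2.1, hy.1⟩
    _ = ENNReal.ofReal x := by rw [Real.volume_Ico, sub_zero]

variable {ι : Type*} [Fintype ι]

/-- The rank of an independent uniform point among `card ι` uniform points is uniform on
`{0, …, card ι}`. -/
theorem setLIntegral_lintegral_card_le (g : ℕ → ℝ≥0∞) :
    ∫⁻ t in Set.Icc (0 : ℝ) 1, ∫⁻ ω, g (#{i | ω i ≤ t})
        ∂Measure.pi (fun _ : ι => volume.restrict (Set.Icc (0 : ℝ) 1)) =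
      (∑ k ∈ range (Fintype.card ι + 1), g k) / (Fintype.card ι + 1) := by
  have hinner : ∀ t ∈ Set.Icc (0 : ℝ) 1,
      ∫⁻ ω, g (#{i | ω i ≤ t}) ∂Measure.pi (fun _ : ι => volume.restrict (Set.Icc (0 : ℝ) 1)) =
        ∑ k ∈ range (Fintype.card ι + 1), (Fintype.card ι).choose k * ENNReal.ofReal t ^ k *
          ENNReal.ofReal (1 - t) ^ (Fintype.card ι - k) * g k := fun t ht => by
    have hgt : {x : ℝ | ¬ x ≤ t} = Set.Ioi t := by ext; simp
    rw [lintegral_comp_card_filter (· ≤ t) _ measurableSet_Iic, hgt, volume_restrict_Icc_Ioi ht,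
      show {x : ℝ | x ≤ t} = Set.Iic t from rfl, volume_restrict_Icc_Iic ht]
  rw [setLIntegral_congr_fun measurableSet_Icc hinner,
    lintegral_finsetSum _ fun k _ => by fun_prop, ENNReal.div_eq_inv_mul, mul_sum]
  refine sum_congr rfl fun k hk => ?_
  rw [lintegral_mul_const _ (by fun_prop), lintegral_choose_mul_pow_mul_one_sub_pow
    (Nat.lt_succ_iff.1 (mem_range.1 hk))]

theorem measurable_card_filter_le :
    Measurable fun p : (ι → ℝ) × ℝ => #{i | p.1 i ≤ p.2} := by
  simp_rw [card_filter]
  exact Finset.measurable_sum _ fun i _ =>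
    Measurable.ite (measurableSet_le (by fun_prop) measurable_snd) measurable_const measurable_const

theorem setLIntegral_card_tsub_card_le_le_sum (S : Finset ι) {ω : ι → ℝ}
    (hω : ∀ i ∈ S, 0 ≤ ω i) :
    ∫⁻ t in Set.Icc (0 : ℝ) 1, ((#S - #{i | ω i ≤ t} : ℕ) : ℝ≥0∞) ≤
      ENNReal.ofReal (∑ i ∈ S, ω i) := by
  have hcount (t : ℝ) : ((#S - #{i | ω i ≤ t} : ℕ) : ℝ≥0∞) ≤
      ∑ i ∈ S, (Set.Iio (ω i)).indicator 1 t := by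
    have hsplit := card_filter_add_card_filter_not (s := S) (fun i => ω i ≤ t)
    have hsub : #{i ∈ S | ω i ≤ t} ≤ #{i | ω i ≤ t} :=
      card_le_card (filter_subset_filter _ (subset_univ S))
    simp only [not_le] at hsplit
    simp only [Set.indicator_apply, Set.mem_Iio, Pi.one_apply, sum_boole]
    exact_mod_cast (by omega : #S - #{i | ω i ≤ t} ≤ #{i ∈ S | t < ω i})
  calc ∫⁻ t in Set.Icc (0 : ℝ) 1, ((#S - #{i | ω i ≤ t} : ℕ) : ℝ≥0∞)
      ≤ ∫⁻ t in Set.Icc (0 : ℝ) 1, ∑ i ∈ S, (Set.Iio (ω i)).indicator 1 t :=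
        lintegral_mono hcount
    _ = ∑ i ∈ S, volume.restrict (Set.Icc (0 : ℝ) 1) (Set.Iio (ω i)) := by
        rw [lintegral_finsetSum _ fun i _ => measurable_one.indicator measurableSet_Iio]
        simp_rw [lintegral_indicator_one measurableSet_Iio]
    _ ≤ ∑ i ∈ S, ENNReal.ofReal (ω i) := sum_le_sum fun i _ => volume_restrict_Icc_Iio_le _
    _ = ENNReal.ofReal (∑ i ∈ S, ω i) := (ENNReal.ofReal_sum_of_nonneg hω).symm

end Uniform

theorem ae_pi_restrict_forall_mem {ι α : Type*} [Fintype ι] [MeasurableSpace α] {ν : Measure α}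
    [SigmaFinite ν] {s : Set α} (hs : MeasurableSet s) :
    ∀ᵐ ω ∂Measure.pi (fun _ : ι => ν.restrict s), ∀ i, ω i ∈ s :=
  ae_all_iff.2 fun _ => Measure.tendsto_eval_ae_ae.eventually (ae_restrict_mem hs)

theorem sum_tsub_div_le_lintegral_inf'_sum {ι : Type*} [Fintype ι] {N : ℕ}
    (𝔖 : Finset (Finset ι)) (h𝔖 : 𝔖.Nonempty) (hcard : ∀ S ∈ 𝔖, #S = N) :
    (∑ k ∈ range (Fintype.card ι + 1), ((N - k : ℕ) : ℝ≥0∞)) / (Fintype.card ι + 1) ≤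
      ∫⁻ ω, ENNReal.ofReal (𝔖.inf' h𝔖 fun S => ∑ i ∈ S, ω i)
        ∂Measure.pi (fun _ : ι => volume.restrict (Set.Icc (0 : ℝ) 1)) := by
  set μ := Measure.pi fun _ : ι => volume.restrict (Set.Icc (0 : ℝ) 1)
  calc (∑ k ∈ range (Fintype.card ι + 1), ((N - k : ℕ) : ℝ≥0∞)) / (Fintype.card ι + 1)
      = ∫⁻ t in Set.Icc (0 : ℝ) 1, ∫⁻ ω, ((N - #{i | ω i ≤ t} : ℕ) : ℝ≥0∞) ∂μ :=
        (setLIntegral_lintegral_card_le fun k => (N - k : ℕ)).symm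
    _ = ∫⁻ ω, (∫⁻ t in Set.Icc (0 : ℝ) 1, ((N - #{i | ω i ≤ t} : ℕ) : ℝ≥0∞)) ∂μ := by
        refine (lintegral_lintegral_swap ?_).symm
        exact ((measurable_from_nat (f := fun n : ℕ => ((N - n : ℕ) : ℝ≥0∞))).comp
          measurable_card_filter_le).aemeasurable
    _ ≤ ∫⁻ ω, ENNReal.ofReal (𝔖.inf' h𝔖 fun S => ∑ i ∈ S, ω i) ∂μ := by
        refine lintegral_mono_ae ((ae_pi_restrict_forall_mem measurableSet_Icc).mono
          fun ω hω => ?_)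
        obtain ⟨S, hS, hFS⟩ := exists_mem_eq_inf' h𝔖 fun S => ∑ i ∈ S, ω i
        rw [hFS, ← hcard S hS]
        exact setLIntegral_card_tsub_card_le_le_sum S fun i _ => (hω i).1

theorem stmt_4_general (m N : ℕ) (hN : N ≤ m)
    (𝔖 : Finset (Finset (Fin m))) (h𝔖 : 𝔖.Nonempty)
    (hcard : ∀ S ∈ 𝔖, S.card = N) :
    (∑ k ∈ Finset.Icc 1 N, (k : ℝ) / (m + 1)) ≤
      (∫ ω : Fin m → ℝ, 𝔖.inf' h𝔖 (fun S => ∑ i ∈ S, ω i)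
        ∂(Measure.pi fun _ : Fin m => volume.restrict (Set.Icc (0 : ℝ) 1))) ∧
    ∑ k ∈ Finset.Icc 1 N, (k : ℝ) / (m + 1) = N * (N + 1) / (2 * (m + 1)) := by
  refine ⟨?_, by rw [← sum_div, sum_Icc_one_natCast]; field_simp⟩
  set μ := Measure.pi fun _ : Fin m => volume.restrict (Set.Icc (0 : ℝ) 1)
  set F := fun ω : Fin m → ℝ => 𝔖.inf' h𝔖 fun S => ∑ i ∈ S, ω i
  have hF_bound : ∀ᵐ ω ∂μ, 0 ≤ F ω ∧ F ω ≤ N := by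
    obtain ⟨S₀, hS₀⟩ := id h𝔖
    refine (ae_pi_restrict_forall_mem measurableSet_Icc).mono fun ω hω =>
      ⟨le_inf' _ _ fun S _ => sum_nonneg fun i _ => (hω i).1, ?_⟩
    calc F ω ≤ ∑ i ∈ S₀, ω i := inf'_le _ hS₀
      _ ≤ N := by simpa [hcard S₀ hS₀] using sum_le_card_nsmul S₀ ω 1 fun i _ => (hω i).2
  have hF_nonneg : 0 ≤ᵐ[μ] F := hF_bound.mono fun _ h => h.1
  have hF_int : Integrable F μ := Integrable.of_bound (by fun_prop) N
    (hF_bound.mono fun _ h => by rw [Real.norm_of_nonneg h.1]; exact h.2)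
  have key := sum_tsub_div_le_lintegral_inf'_sum 𝔖 h𝔖 hcard
  rw [Fintype.card_fin, ← ofReal_integral_eq_lintegral_ofReal hF_int hF_nonneg] at key
  rwa [← sum_div, ← Nat.cast_sum, ← sum_range_tsub_eq_sum_Icc hN, ← ENNReal.ofReal_le_ofReal_iff
    (integral_nonneg_of_ae hF_nonneg), ENNReal.ofReal_div_of_pos (by positivity),
    ENNReal.ofReal_natCast, ENNReal.ofReal_add (by positivity) zero_le_one,
    ENNReal.ofReal_natCast, ENNReal.ofReal_one, Nat.cast_sum]

/-- Lower bound for the expected minimum weight over a family `𝔖` of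
`N`-element subsets of `Fin m`, with i.i.d. uniform weights on `[0,1]`:
the expectation of `min_{S ∈ 𝔖} ∑_{i ∈ S} ω i` is at least
`∑_{k=1}^N k/(m+1) = N(N+1)/(2(m+1))`. -/
theorem stmt_4 (m N : ℕ) (hm : 1 ≤ m) (hN1 : 1 ≤ N) (hN : N ≤ m)
    (𝔖 : Finset (Finset (Fin m))) (h𝔖 : 𝔖.Nonempty)
    (hcard : ∀ S ∈ 𝔖, S.card = N) :
    (∑ k ∈ Finset.Icc 1 N, (k : ℝ) / (m + 1)) ≤
      (∫ ω : Fin m → ℝ, 𝔖.inf' h𝔖 (fun S => ∑ i ∈ S, ω i)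
        ∂(Measure.pi fun _ : Fin m => volume.restrict (Set.Icc (0 : ℝ) 1))) ∧
    ∑ k ∈ Finset.Icc 1 N, (k : ℝ) / (m + 1) = N * (N + 1) / (2 * (m + 1)) :=
  stmt_4_general m N hN 𝔖 h𝔖 hcard
end

section
/- For every t ∈ (0,1) and every real number a, Σ_{F ⊆ E} t^{|F|}·(1−t)^{|E|−|F|}·a^{κ−r(F)} = (1−t)^{|E|}·(t/(1−t))^{κ}·T(1 + ((1−t)/t)·a, 1/(1−t)). In particular, the Laplace transform E[a^{β(X(t))}] of the (ℓ−1)-st reduced Betti number of the ℓ-Bernoulli cell complex with parameter t is expressed through the ℓ-Tutte polynomial. -/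
section SpanRank

variable {K ι V : Type*} [Field K] [AddCommGroup V] [Module K V] (f : ι → V)

theorem finrank_span_image_le_card (F : Finset ι) :
    Module.finrank K (Submodule.span K (f '' (F : Set ι))) ≤ F.card := by
  classical
  rw [← Finset.coe_image]
  exact (finrank_span_finset_le_card _).trans Finset.card_image_le

theorem finrank_span_image_mono {F G : Finset ι} (hFG : F ⊆ G) :
    Module.finrank K (Submodule.span K (f '' (F : Set ι))) ≤
      Module.finrank K (Submodule.span K (f '' (G : Set ι))) := by
  have : Module.Finite K (Submodule.span K (f '' (G : Set ι))) :=
    FiniteDimensional.span_of_finite K ((G.finite_toSet).image f)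
  exact Submodule.finrank_mono (Submodule.span_mono (Set.image_mono (by exact_mod_cast hFG)))

end SpanRank

/-- With `u = 1 - t`, the substitution `x - 1 = u/t · a`, `y - 1 = t/u` turns the Tutte
monomial of a set of size `c` and rank `r` into its Bernoulli weight. -/
theorem pow_mul_pow_mul_pow_eq_tutte_monomial {t u : ℝ} (ht : t ≠ 0) (hu : u ≠ 0)
    (a : ℝ) {r c n κ : ℕ} (hrκ : r ≤ κ) (hrc : r ≤ c) (hcn : c ≤ n) :
    t ^ c * u ^ (n - c) * a ^ (κ - r) =
      u ^ n * (t / u) ^ κ * ((u / t * a) ^ (κ - r) * (t / u) ^ (c - r)) := by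
  obtain ⟨k, rfl⟩ := Nat.exists_eq_add_of_le hrκ
  obtain ⟨m, rfl⟩ := Nat.exists_eq_add_of_le hrc
  obtain ⟨p, rfl⟩ := Nat.exists_eq_add_of_le hcn
  simp only [Nat.add_sub_cancel_left, div_pow, mul_pow, pow_add]
  field_simp

theorem stmt_6_general {K : Type*} [Field K] {E : Type*} [Fintype E] [DecidableEq E]
    {V : Type*} [AddCommGroup V] [Module K V]
    (bdry : (E → K) →ₗ[K] V)
    (r : Finset E → ℕ)
    (hr : ∀ F : Finset E, r F = Module.finrank K (Submodule.span K
      ((fun σ => bdry (Pi.single σ 1)) '' (F : Set E))))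
    (κ : ℕ) (hκ : r Finset.univ ≤ κ)
    (T : ℝ → ℝ → ℝ)
    (hT : ∀ x y : ℝ, T x y =
      ∑ F : Finset E, (x - 1) ^ (κ - r F) * (y - 1) ^ (F.card - r F))
    (t : ℝ) (ht : t ∈ Set.Ioo (0 : ℝ) 1) (a : ℝ) :
    ∑ F : Finset E,
        t ^ F.card * (1 - t) ^ (Fintype.card E - F.card) * a ^ (κ - r F) =
      (1 - t) ^ Fintype.card E * (t / (1 - t)) ^ κ *
        T (1 + (1 - t) / t * a) (1 / (1 - t)) := by
  obtain ⟨ht0, ht1⟩ := ht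
  have hu : 1 - t ≠ 0 := by linarith
  have hy : 1 / (1 - t) - 1 = t / (1 - t) := by field_simp; ring
  rw [hT, add_sub_cancel_left, hy, Finset.mul_sum]
  refine Finset.sum_congr rfl fun F _ => ?_
  have hrκ : r F ≤ κ := by
    refine le_trans ?_ hκ
    rw [hr, hr]
    exact finrank_span_image_mono _ (Finset.subset_univ F)
  have hrF : r F ≤ F.card := hr F ▸ finrank_span_image_le_card _ F
  exact pow_mul_pow_mul_pow_eq_tutte_monomial ht0.ne' hu a hrκ hrF (Finset.card_le_univ F)

/-- The Laplace transform `E[a^{β(X(t))}]` of the `(ℓ-1)`-st reduced Betti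
number of the `ℓ`-Bernoulli cell complex with parameter `t` is expressed
through the `ℓ`-Tutte polynomial
`T(x,y) = ∑_{F ⊆ E} (x-1)^{κ-r(F)} (y-1)^{|F|-r(F)}`. -/
theorem stmt_6 {K : Type*} [Field K] {E : Type*} [Fintype E] [DecidableEq E]
    {V : Type*} [AddCommGroup V] [Module K V] [FiniteDimensional K V]
    (bdry : (E → K) →ₗ[K] V)
    (r : Finset E → ℕ)
    (hr : ∀ F : Finset E, r F = Module.finrank K (Submodule.span K
      ((fun σ => bdry (Pi.single σ 1)) '' (F : Set E))))
    (κ : ℕ) (hκ : r Finset.univ ≤ κ)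
    (T : ℝ → ℝ → ℝ)
    (hT : ∀ x y : ℝ, T x y =
      ∑ F : Finset E, (x - 1) ^ (κ - r F) * (y - 1) ^ (F.card - r F))
    (t : ℝ) (ht : t ∈ Set.Ioo (0 : ℝ) 1) (a : ℝ) :
    ∑ F : Finset E,
        t ^ F.card * (1 - t) ^ (Fintype.card E - F.card) * a ^ (κ - r F) =
      (1 - t) ^ Fintype.card E * (t / (1 - t)) ^ κ *
        T (1 + (1 - t) / t * a) (1 / (1 - t)) :=
  stmt_6_general bdry r hr κ hκ T hT t ht a
end

section
/- For every t ∈ (0,1), T(1/t, 1/(1−t)) > 0 and Σ_{F ⊆ E} t^{|F|}·(1−t)^{|E|−|F|}·(κ − r(F)) = ((1−t)/t) · T_x(1/t, 1/(1−t)) / T(1/t, 1/(1−t)). That is, the expected (ℓ−1)-st reduced Betti number of the ℓ-Bernoulli cell complex with parameter t equals ((1−t)/t) times the logarithmic x-derivative of the ℓ-Tutte polynomial at (1/t, 1/(1−t)). -/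
/-!
With `x - 1 = (1 - t)/t` and `y - 1 = t/(1 - t)`, the Bernoulli weight `t^|F| (1-t)^(|E|-|F|)`
of every `F ⊆ E` equals `c · (x-1)^(κ - r F) (y-1)^(|F| - r F)` for the single constant
`c = t^κ (1-t)^(|E|-κ)`; the natural-number exponents are genuine differences because
`r F ≤ r E ≤ κ` and `r F ≤ |F|`. Since the weights sum to `1`, this gives `c · T(x, y) = 1`, and the same
termwise identity turns the expectation of `κ - r F` into `c · (x-1) T_x(x, y)`.
-/

open Finset

section SpanRank

variable {K M ι : Type*} [DivisionRing K] [AddCommGroup M] [Module K M]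

theorem finrank_span_image_finset_le_card (v : ι → M) (F : Finset ι) :
    Module.finrank K (Submodule.span K (v '' (F : Set ι))) ≤ F.card := by
  classical
  rw [← coe_image]
  exact (finrank_span_finset_le_card _).trans card_image_le

theorem finrank_span_image_finset_mono (v : ι → M) {F G : Finset ι} (hFG : F ⊆ G) :
    Module.finrank K (Submodule.span K (v '' (F : Set ι))) ≤
      Module.finrank K (Submodule.span K (v '' (G : Set ι))) :=
  have := Module.Finite.span_of_finite K (G.finite_toSet.image v)
  Submodule.finrank_mono (Submodule.span_mono (Set.image_mono (coe_subset.mpr hFG)))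

end SpanRank

theorem mul_natCast_mul_pow_sub_one {R : Type*} [CommSemiring R] (x : R) (k : ℕ) :
    x * (k * x ^ (k - 1)) = k * x ^ k := by
  cases k with
  | zero => simp
  | succ k => rw [Nat.add_sub_cancel, pow_succ]; ring

section Bernoulli

variable {t : ℝ}

theorem sum_bernoulli_weight (E : Type*) [Fintype E] :
    ∑ F : Finset E, t ^ F.card * (1 - t) ^ (Fintype.card E - F.card) = 1 := by
  rw [← powerset_univ, ← card_univ, sum_pow_mul_eq_add_pow, add_sub_cancel, one_pow]

theorem bernoulli_weight_eq_mul_pow (ht0 : t ≠ 0) (ht1 : 1 - t ≠ 0) {k m n κ : ℕ}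
    (hkκ : k ≤ κ) (hkm : k ≤ m) (hmn : m ≤ n) :
    t ^ m * (1 - t) ^ (n - m) =
      t ^ κ * (1 - t) ^ n / (1 - t) ^ κ *
        ((1 / t - 1) ^ (κ - k) * (1 / (1 - t) - 1) ^ (m - k)) := by
  obtain ⟨p, rfl⟩ := Nat.exists_eq_add_of_le hkκ
  obtain ⟨q, rfl⟩ := Nat.exists_eq_add_of_le hkm
  obtain ⟨s, rfl⟩ := Nat.exists_eq_add_of_le hmn
  have hx : 1 / t - 1 = (1 - t) / t := by field_simp
  have hy : 1 / (1 - t) - 1 = t / (1 - t) := by field_simp; ring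
  simp only [Nat.add_sub_cancel_left, hx, hy, div_pow]
  field_simp
  ring

end Bernoulli

theorem stmt_7_general {K : Type*} [Field K] {E : Type*} [Fintype E] [DecidableEq E]
    {V : Type*} [AddCommGroup V] [Module K V]
    (bdry : (E → K) →ₗ[K] V)
    (r : Finset E → ℕ)
    (hr : ∀ F : Finset E, r F = Module.finrank K (Submodule.span K
      ((fun σ => bdry (Pi.single σ 1)) '' (F : Set E))))
    (κ : ℕ) (hκ : r Finset.univ ≤ κ)
    (T Tx : ℝ → ℝ → ℝ)
    (hT : ∀ x y : ℝ, T x y =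
      ∑ F : Finset E, (x - 1) ^ (κ - r F) * (y - 1) ^ (F.card - r F))
    (hTx : ∀ x y : ℝ, Tx x y =
      ∑ F : Finset E,
        (κ - r F : ℕ) * (x - 1) ^ (κ - r F - 1) * (y - 1) ^ (F.card - r F))
    (t : ℝ) (ht : t ∈ Set.Ioo (0 : ℝ) 1) :
    0 < T (1 / t) (1 / (1 - t)) ∧
    ∑ F : Finset E,
        t ^ F.card * (1 - t) ^ (Fintype.card E - F.card) * ((κ - r F : ℕ) : ℝ) =
      (1 - t) / t * Tx (1 / t) (1 / (1 - t)) / T (1 / t) (1 / (1 - t)) := by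
  obtain ⟨ht0, ht1⟩ := ht
  have h1t : 0 < 1 - t := sub_pos.mpr ht1
  set c := t ^ κ * (1 - t) ^ Fintype.card E / (1 - t) ^ κ
  have hweight (F : Finset E) : t ^ F.card * (1 - t) ^ (Fintype.card E - F.card) =
      c * ((1 / t - 1) ^ (κ - r F) * (1 / (1 - t) - 1) ^ (F.card - r F)) := by
    refine bernoulli_weight_eq_mul_pow ht0.ne' h1t.ne' ?_ ?_ (card_le_univ F)
    · rw [hr] at hκ ⊢
      exact (finrank_span_image_finset_mono _ (subset_univ F)).trans hκ
    · rw [hr]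
      exact finrank_span_image_finset_le_card _ F
  have hT_eq : T (1 / t) (1 / (1 - t)) = c⁻¹ := by
    refine eq_inv_of_mul_eq_one_right ?_
    rw [hT, mul_sum]
    exact (sum_congr rfl fun F _ => (hweight F).symm).trans (sum_bernoulli_weight E)
  have hTx_eq : (1 - t) / t * Tx (1 / t) (1 / (1 - t)) = ∑ F : Finset E,
      ((κ - r F : ℕ) : ℝ) * (1 / t - 1) ^ (κ - r F) * (1 / (1 - t) - 1) ^ (F.card - r F) := by
    rw [hTx, show (1 - t) / t = 1 / t - 1 by field_simp, mul_sum]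
    refine sum_congr rfl fun F _ => ?_
    rw [← mul_natCast_mul_pow_sub_one]
    ring
  refine ⟨hT_eq ▸ by positivity, ?_⟩
  rw [hT_eq, div_inv_eq_mul, hTx_eq, sum_mul]
  refine sum_congr rfl fun F _ => ?_
  rw [hweight F]
  ring

/-- The expected `(ℓ-1)`-st reduced Betti number of the `ℓ`-Bernoulli cell
complex with parameter `t` equals `((1-t)/t)` times the logarithmic
`x`-derivative of the `ℓ`-Tutte polynomial at `(1/t, 1/(1-t))`. -/
theorem stmt_7 {K : Type*} [Field K] {E : Type*} [Fintype E] [DecidableEq E]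
    {V : Type*} [AddCommGroup V] [Module K V] [FiniteDimensional K V]
    (bdry : (E → K) →ₗ[K] V)
    (r : Finset E → ℕ)
    (hr : ∀ F : Finset E, r F = Module.finrank K (Submodule.span K
      ((fun σ => bdry (Pi.single σ 1)) '' (F : Set E))))
    (κ : ℕ) (hκ : r Finset.univ ≤ κ)
    (T Tx : ℝ → ℝ → ℝ)
    (hT : ∀ x y : ℝ, T x y =
      ∑ F : Finset E, (x - 1) ^ (κ - r F) * (y - 1) ^ (F.card - r F))
    (hTx : ∀ x y : ℝ, Tx x y =
      ∑ F : Finset E,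
        (κ - r F : ℕ) * (x - 1) ^ (κ - r F - 1) * (y - 1) ^ (F.card - r F))
    (t : ℝ) (ht : t ∈ Set.Ioo (0 : ℝ) 1) :
    0 < T (1 / t) (1 / (1 - t)) ∧
    ∑ F : Finset E,
        t ^ F.card * (1 - t) ^ (Fintype.card E - F.card) * ((κ - r F : ℕ) : ℝ) =
      (1 - t) / t * Tx (1 / t) (1 / (1 - t)) / T (1 / t) (1 / (1 - t)) :=
  stmt_7_general bdry r hr κ hκ T Tx hT hTx t ht
end

section
/- For every p ∈ (0,1), every real q ≥ 1, and all subsets Y, Y' ⊆ E, the ℓ-random-cluster weights w(F) = p^{|F|}·(1−p)^{|E|−|F|}·q^{κ−r(F)} satisfy the FKG lattice property: w(Y ∪ Y')·w(Y ∩ Y') ≥ w(Y)·w(Y'). -/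
/-!
The rank function `r F = dim span ∂(F)` of a family of vectors is monotone and submodular, since
`span ∂(Y ∪ Y') = span ∂(Y) ⊔ span ∂(Y')` and `span ∂(Y ∩ Y') ≤ span ∂(Y) ⊓ span ∂(Y')`.
The `p`- and `(1-p)`-parts of the weight are modular in `F` (inclusion–exclusion for cardinalities),
while `F ↦ κ - r F` is supermodular, so for `q ≥ 1` the `q`-part can only grow when `(Y, Y')` is
replaced by `(Y ∪ Y', Y ∩ Y')`.
-/

open Finset Module Submodule

section SpanRank

variable (K : Type*) {V ι : Type*} [Field K] [AddCommGroup V] [Module K V]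

noncomputable def familyRank (v : ι → V) (s : Finset ι) : ℕ :=
  finrank K (span K (v '' s))

variable {K} (v : ι → V)

instance (s : Finset ι) : FiniteDimensional K (span K (v '' s)) :=
  FiniteDimensional.span_of_finite K (s.finite_toSet.image v)

theorem familyRank_mono : Monotone (familyRank K v) := fun _ _ h =>
  Submodule.finrank_mono (span_mono (Set.image_mono (coe_subset.mpr h)))

theorem familyRank_union_add_inter_le [DecidableEq ι] (s t : Finset ι) :
    familyRank K v (s ∪ t) + familyRank K v (s ∩ t) ≤ familyRank K v s + familyRank K v t := by
  have h_union : span K (v '' ↑(s ∪ t)) = span K (v '' s) ⊔ span K (v '' t) := by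
    rw [coe_union, Set.image_union, span_union]
  have h_inter : span K (v '' ↑(s ∩ t)) ≤ span K (v '' s) ⊓ span K (v '' t) := by
    rw [coe_inter]
    exact le_inf (span_mono (Set.image_mono Set.inter_subset_left))
      (span_mono (Set.image_mono Set.inter_subset_right))
  calc familyRank K v (s ∪ t) + familyRank K v (s ∩ t)
      ≤ finrank K ↥(span K (v '' s) ⊔ span K (v '' t))
        + finrank K ↥(span K (v '' s) ⊓ span K (v '' t)) := by
        unfold familyRank
        rw [h_union]
        exact Nat.add_le_add_left (Submodule.finrank_mono h_inter) _
    _ = familyRank K v s + familyRank K v t := finrank_sup_add_finrank_inf_eq _ _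

end SpanRank

section RandomClusterWeight

variable {E : Type*} [Fintype E]

noncomputable def randomClusterWeight (r : Finset E → ℕ) (κ : ℕ) (p q : ℝ) (F : Finset E) : ℝ :=
  p ^ F.card * (1 - p) ^ (Fintype.card E - F.card) * q ^ (κ - r F)

theorem randomClusterWeight_mul (r : Finset E → ℕ) (κ : ℕ) (p q : ℝ) (A B : Finset E) :
    randomClusterWeight r κ p q A * randomClusterWeight r κ p q B =
      p ^ (A.card + B.card) * (1 - p) ^ ((Fintype.card E - A.card) + (Fintype.card E - B.card))
        * q ^ ((κ - r A) + (κ - r B)) := by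
  simp only [randomClusterWeight, pow_add]
  ring

theorem tsub_add_tsub_le_tsub_add_tsub {κ a b u i : ℕ} (hia : i ≤ a) (hau : a ≤ u)
    (hsub : u + i ≤ a + b) :
    (κ - a) + (κ - b) ≤ (κ - u) + (κ - i) := by
  omega

theorem randomClusterWeight_mul_le_union_mul_inter [DecidableEq E] {r : Finset E → ℕ}
    (hmono : Monotone r) (hsub : ∀ A B, r (A ∪ B) + r (A ∩ B) ≤ r A + r B) (κ : ℕ) {p q : ℝ}
    (hp : p ∈ Set.Icc 0 1) (hq : 1 ≤ q) (A B : Finset E) :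
    randomClusterWeight r κ p q A * randomClusterWeight r κ p q B ≤
      randomClusterWeight r κ p q (A ∪ B) * randomClusterWeight r κ p q (A ∩ B) := by
  have h_card : (A ∪ B).card + (A ∩ B).card = A.card + B.card := card_union_add_card_inter A B
  have h_cocard : (Fintype.card E - (A ∪ B).card) + (Fintype.card E - (A ∩ B).card) =
      (Fintype.card E - A.card) + (Fintype.card E - B.card) := by
    have := card_le_univ (A ∪ B)
    have := card_le_univ A
    have := card_le_univ B
    have := card_le_univ (A ∩ B)
    omega
  have h_corank : (κ - r A) + (κ - r B) ≤ (κ - r (A ∪ B)) + (κ - r (A ∩ B)) :=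
    tsub_add_tsub_le_tsub_add_tsub (hmono inter_subset_left) (hmono subset_union_left) (hsub A B)
  rw [randomClusterWeight_mul, randomClusterWeight_mul, h_card, h_cocard]
  exact mul_le_mul_of_nonneg_left (pow_le_pow_right₀ hq h_corank)
    (mul_nonneg (pow_nonneg hp.1 _) (pow_nonneg (sub_nonneg.mpr hp.2) _))

end RandomClusterWeight

theorem stmt_11_general {K : Type*} [Field K] {E : Type*} [Fintype E] [DecidableEq E]
    {V : Type*} [AddCommGroup V] [Module K V]
    (bdry : (E → K) →ₗ[K] V)
    (r : Finset E → ℕ)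
    (hr : ∀ F : Finset E, r F = Module.finrank K (Submodule.span K
      ((fun σ => bdry (Pi.single σ 1)) '' (F : Set E))))
    (κ : ℕ)
    (p q : ℝ) (hp : p ∈ Set.Ioo (0 : ℝ) 1) (hq : 1 ≤ q)
    (w : Finset E → ℝ)
    (hw : ∀ F : Finset E,
      w F = p ^ F.card * (1 - p) ^ (Fintype.card E - F.card) * q ^ (κ - r F))
    (Y Y' : Finset E) :
    w Y * w Y' ≤ w (Y ∪ Y') * w (Y ∩ Y') := by
  have hr : r = familyRank K (fun σ => bdry (Pi.single σ 1)) := funext hr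
  have hw : w = randomClusterWeight r κ p q := funext hw
  subst hr hw
  exact randomClusterWeight_mul_le_union_mul_inter (familyRank_mono _)
    (familyRank_union_add_inter_le _) κ (Set.Ioo_subset_Icc_self hp) hq Y Y'

/-- The `ℓ`-random-cluster weights
`w(F) = p^{|F|} (1-p)^{|E|-|F|} q^{κ-r(F)}` satisfy the FKG lattice
property `w(Y ∪ Y') w(Y ∩ Y') ≥ w(Y) w(Y')` for `p ∈ (0,1)` and `q ≥ 1`. -/
theorem stmt_11 {K : Type*} [Field K] {E : Type*} [Fintype E] [DecidableEq E]
    {V : Type*} [AddCommGroup V] [Module K V] [FiniteDimensional K V]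
    (bdry : (E → K) →ₗ[K] V)
    (r : Finset E → ℕ)
    (hr : ∀ F : Finset E, r F = Module.finrank K (Submodule.span K
      ((fun σ => bdry (Pi.single σ 1)) '' (F : Set E))))
    (κ : ℕ) (hκ : r Finset.univ ≤ κ)
    (p q : ℝ) (hp : p ∈ Set.Ioo (0 : ℝ) 1) (hq : 1 ≤ q)
    (w : Finset E → ℝ)
    (hw : ∀ F : Finset E,
      w F = p ^ F.card * (1 - p) ^ (Fintype.card E - F.card) * q ^ (κ - r F))
    (Y Y' : Finset E) :
    w Y * w Y' ≤ w (Y ∪ Y') * w (Y ∩ Y') :=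
  stmt_11_general bdry r hr κ p q hp hq w hw Y Y'
end

section
/- Assume κ = r(E) and let B = {F ⊆ E : |F| = κ and r(F) = κ} be the (nonempty) set of ℓ-spanning acycles of X over K. Let (p_n) and (q_n) be sequences with 0 < p_n < 1, q_n > 0, p_n → 0, and q_n/p_n → 0. Then for every Y ⊆ E, μ_{p_n,q_n}(Y) → (1/|B|)·𝟙[Y ∈ B] as n → ∞; that is, the ℓ-random-cluster measure converges to the uniform measure on ℓ-spanning acycles. -/
open Finset Filter Module Submodule

/-!
Dividing every weight by `p ^ κ`, the weight of `F` becomes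
`p ^ (|F| - r F) * (1 - p) ^ (|E| - |F|) * (q / p) ^ (κ - r F)`. Since `r F ≤ |F|` and
`r F ≤ κ`, as `p → 0` and `q / p → 0` this tends to `1` when `|F| = r F = κ`, i.e. when `F` is a
spanning acycle, and to `0` otherwise. Hence the normalised weights converge to the indicator
of `B` divided by `|B|`.
-/

theorem finrank_span_image_le_card_s14 {K V E : Type*} [DivisionRing K] [AddCommGroup V]
    [Module K V] (f : E → V) (F : Finset E) :
    finrank K (span K (f '' (F : Set E))) ≤ F.card := by
  classical
  rw [← coe_image]
  exact (finrank_span_finset_le_card _).trans card_image_le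

theorem finrank_span_image_le_finrank_span_range {K V E : Type*} [DivisionRing K]
    [AddCommGroup V] [Module K V] [Finite E] (f : E → V) (s : Set E) :
    finrank K (span K (f '' s)) ≤ finrank K (span K (Set.range f)) := by
  have : Module.Finite K (span K (Set.range f)) :=
    Module.Finite.span_of_finite K (Set.finite_range f)
  exact finrank_mono (span_mono (Set.image_subset_range f s))

section ScaledWeight

variable {E : Type*} [Fintype E] (r : Finset E → ℕ) (κ : ℕ)

/-- The random-cluster weight of `F` divided by `p ^ κ`, written in terms of `t = q / p`. -/
noncomputable def scaledWeight (p t : ℝ) (F : Finset E) : ℝ :=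
  p ^ (F.card - r F) * (1 - p) ^ (Fintype.card E - F.card) * t ^ (κ - r F)

variable {r κ}

theorem weight_eq_pow_mul_scaledWeight {F : Finset E} (hcard : r F ≤ F.card) (hκ : r F ≤ κ)
    {p : ℝ} (hp : p ≠ 0) (q : ℝ) :
    p ^ F.card * (1 - p) ^ (Fintype.card E - F.card) * q ^ (κ - r F) =
      p ^ κ * scaledWeight r κ p (q / p) F := by
  obtain ⟨a, hF⟩ := Nat.exists_eq_add_of_le hcard
  obtain ⟨b, hκ⟩ := Nat.exists_eq_add_of_le hκ
  simp only [scaledWeight, hF, hκ, Nat.add_sub_cancel_left, div_pow]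
  field_simp
  ring

theorem tendsto_scaledWeight {F : Finset E} (hcard : r F ≤ F.card) (hκ : r F ≤ κ)
    {ι : Type*} {l : Filter ι} {p t : ι → ℝ} (hp : Tendsto p l (nhds 0))
    (ht : Tendsto t l (nhds 0)) :
    Tendsto (fun i => scaledWeight r κ (p i) (t i) F) l
      (nhds (if F.card = κ ∧ r F = κ then 1 else 0)) := by
  have h1p : Tendsto (fun i => 1 - p i) l (nhds (1 - 0)) := tendsto_const_nhds.sub hp
  have hcond : F.card = κ ∧ r F = κ ↔ F.card - r F = 0 ∧ κ - r F = 0 := by omega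
  have hval : (if F.card = κ ∧ r F = κ then (1 : ℝ) else 0) =
      0 ^ (F.card - r F) * (1 - 0) ^ (Fintype.card E - F.card) * 0 ^ (κ - r F) := by
    simp only [hcond, sub_zero, one_pow, mul_one, zero_pow_eq, ite_zero_mul_ite_zero]
  rw [hval]
  exact ((hp.pow _).mul (h1p.pow _)).mul (ht.pow _)

end ScaledWeight

theorem tendsto_div_sum_of_tendsto {ι α : Type*} [Fintype ι] {l : Filter α} {f : α → ι → ℝ}
    {L : ι → ℝ} (hf : ∀ i, Tendsto (fun a => f a i) l (nhds (L i))) (hL : ∑ i, L i ≠ 0)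
    (i : ι) : Tendsto (fun a => f a i / ∑ j, f a j) l (nhds (L i / ∑ j, L j)) :=
  (hf i).div (tendsto_finsetSum _ fun j _ => hf j) hL

theorem stmt_14_general {K : Type*} [Field K] {E : Type*} [Fintype E] [DecidableEq E]
    {V : Type*} [AddCommGroup V] [Module K V]
    (bdry : (E → K) →ₗ[K] V)
    (r : Finset E → ℕ)
    (hr : ∀ F : Finset E, r F = Module.finrank K (Submodule.span K
      ((fun σ => bdry (Pi.single σ 1)) '' (F : Set E))))
    (κ : ℕ) (hκ : κ = r Finset.univ)
    (B : Finset (Finset E))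
    (hB : B = Finset.univ.filter fun F : Finset E => F.card = κ ∧ r F = κ)
    (hBne : B.Nonempty)
    (w : ℝ → ℝ → Finset E → ℝ)
    (hw : ∀ (p q : ℝ) (F : Finset E),
      w p q F = p ^ F.card * (1 - p) ^ (Fintype.card E - F.card) * q ^ (κ - r F))
    (Z : ℝ → ℝ → ℝ) (hZ : ∀ p q : ℝ, Z p q = ∑ F : Finset E, w p q F)
    (p q : ℕ → ℝ) (hp : ∀ n, p n ∈ Set.Ioo (0 : ℝ) 1)
    (hp0 : Tendsto p atTop (nhds 0))
    (hqp : Tendsto (fun n => q n / p n) atTop (nhds 0)) :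
    ∀ Y : Finset E,
      Tendsto (fun n => w (p n) (q n) Y / Z (p n) (q n)) atTop
        (nhds (if Y ∈ B then (1 : ℝ) / B.card else 0)) := by
  have hr_card (F : Finset E) : r F ≤ F.card := hr F ▸ finrank_span_image_le_card_s14 _ F
  have hr_κ (F : Finset E) : r F ≤ κ := by
    rw [hκ, hr, hr, coe_univ, Set.image_univ]
    exact finrank_span_image_le_finrank_span_range _ _
  set g := fun n => scaledWeight r κ (p n) (q n / p n)
  have hw_g (n : ℕ) (F : Finset E) : w (p n) (q n) F = p n ^ κ * g n F :=
    (hw _ _ F).trans (weight_eq_pow_mul_scaledWeight (hr_card F) (hr_κ F) (hp n).1.ne' _)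
  have hratio (n : ℕ) (Y : Finset E) :
      w (p n) (q n) Y / Z (p n) (q n) = g n Y / ∑ F, g n F := by
    simp only [hZ, hw_g, ← mul_sum]
    exact mul_div_mul_left _ _ (pow_ne_zero _ (hp n).1.ne')
  have hg (F : Finset E) : Tendsto (fun n => g n F) atTop (nhds (if F ∈ B then 1 else 0)) := by
    simpa [hB] using tendsto_scaledWeight (hr_card F) (hr_κ F) hp0 hqp
  have hsum : ∑ F : Finset E, (if F ∈ B then (1 : ℝ) else 0) = B.card := by simp
  intro Y
  simp only [hratio]
  convert tendsto_div_sum_of_tendsto hg (hsum ▸ Nat.cast_ne_zero.2 hBne.card_pos.ne') Y using 2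
  rw [hsum]
  split_ifs <;> simp

/-- As `p → 0` and `q/p → 0`, the `ℓ`-random-cluster measure converges to the
uniform measure on the set `B` of `ℓ`-spanning acycles of `X` over `K`. -/
theorem stmt_14 {K : Type*} [Field K] {E : Type*} [Fintype E] [DecidableEq E]
    {V : Type*} [AddCommGroup V] [Module K V] [FiniteDimensional K V]
    (bdry : (E → K) →ₗ[K] V)
    (r : Finset E → ℕ)
    (hr : ∀ F : Finset E, r F = Module.finrank K (Submodule.span K
      ((fun σ => bdry (Pi.single σ 1)) '' (F : Set E))))
    (κ : ℕ) (hκ : κ = r Finset.univ)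
    (B : Finset (Finset E))
    (hB : B = Finset.univ.filter fun F : Finset E => F.card = κ ∧ r F = κ)
    (hBne : B.Nonempty)
    (w : ℝ → ℝ → Finset E → ℝ)
    (hw : ∀ (p q : ℝ) (F : Finset E),
      w p q F = p ^ F.card * (1 - p) ^ (Fintype.card E - F.card) * q ^ (κ - r F))
    (Z : ℝ → ℝ → ℝ) (hZ : ∀ p q : ℝ, Z p q = ∑ F : Finset E, w p q F)
    (p q : ℕ → ℝ) (hp : ∀ n, p n ∈ Set.Ioo (0 : ℝ) 1) (hq : ∀ n, 0 < q n)
    (hp0 : Tendsto p atTop (nhds 0))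
    (hqp : Tendsto (fun n => q n / p n) atTop (nhds 0)) :
    ∀ Y : Finset E,
      Tendsto (fun n => w (p n) (q n) Y / Z (p n) (q n)) atTop
        (nhds (if Y ∈ B then (1 : ℝ) / B.card else 0)) :=
  stmt_14_general bdry r hr κ hκ B hB hBne w hw Z hZ p q hp hp0 hqp
end

section
/- Let q be a prime number, let D and E be finite sets, and let ∂ : (D → ZMod q) →ₗ (E → ZMod q) be a linear map over the field ZMod q. For every F ⊆ E and every p ∈ [0,1], Σ_{s : D → ZMod q} ∏_{σ ∈ E} ((1−p)·𝟙[σ ∉ F] + p·𝟙[σ ∈ F]·𝟙[(∂s)(σ) = 0]) = p^{|F|}·(1−p)^{|E|−|F|}·q^{z(F)}, where z(F) is the ZMod q-dimension of the subspace {s : D → ZMod q | (∂s)(σ) = 0 for all σ ∈ F}. -/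
open Finset

/-- The second marginal of the generalized Edwards–Sokal coupling is the
`ℓ`-random-cluster weight: for the coboundary map `∂` with `ℤ_q` coefficients,
`∑_s ∏_{σ ∈ E} ((1-p) 𝟙[σ ∉ F] + p 𝟙[σ ∈ F] 𝟙[(∂s)(σ)=0])
  = p^{|F|} (1-p)^{|E|-|F|} q^{dim Z^{ℓ-1}(X_F)}`. -/
theorem stmt_16 (q : ℕ) [Fact q.Prime] {D E : Type*}
    [Fintype D] [DecidableEq D] [Fintype E] [DecidableEq E]
    (cobdry : (D → ZMod q) →ₗ[ZMod q] (E → ZMod q))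
    (F : Finset E) (p : ℝ) (hp : p ∈ Set.Icc (0 : ℝ) 1) :
    ∑ s : D → ZMod q,
        ∏ σ : E,
          ((1 - p) * (if σ ∈ F then 0 else 1) +
            p * (if σ ∈ F then 1 else 0) * (if cobdry s σ = 0 then 1 else 0)) =
      p ^ F.card * (1 - p) ^ (Fintype.card E - F.card) *
        (q : ℝ) ^ Module.finrank (ZMod q)
          ((⨅ σ ∈ F, LinearMap.ker ((LinearMap.proj σ).comp cobdry) :
            Submodule (ZMod q) (D → ZMod q))) := by
  classical
  set S : Submodule (ZMod q) (D → ZMod q) :=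
    (⨅ σ ∈ F, LinearMap.ker ((LinearMap.proj σ).comp cobdry)) with hS
  have hmem : ∀ s, s ∈ S ↔ ∀ σ ∈ F, cobdry s σ = 0 := by
    intro s
    simp [hS, Submodule.mem_iInf, LinearMap.mem_ker]
  have key : ∀ s : D → ZMod q,
      (∏ σ : E, ((1 - p) * (if σ ∈ F then 0 else 1) +
        p * (if σ ∈ F then 1 else 0) * (if cobdry s σ = 0 then 1 else 0))) =
      p ^ F.card * (1 - p) ^ (Fintype.card E - F.card) *
        (if s ∈ S then (1 : ℝ) else 0) := by
    intro s
    rw [← Finset.prod_mul_prod_compl F]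
    have h1 : ∏ σ ∈ F, ((1 - p) * (if σ ∈ F then 0 else 1) +
        p * (if σ ∈ F then 1 else 0) * (if cobdry s σ = 0 then 1 else 0)) =
        p ^ F.card * (if s ∈ S then (1 : ℝ) else 0) := by
      rw [Finset.prod_congr rfl (fun σ hσ => by
        simp [hσ] : ∀ σ ∈ F, ((1 - p) * (if σ ∈ F then 0 else 1) +
          p * (if σ ∈ F then 1 else 0) * (if cobdry s σ = 0 then 1 else 0)) =
          p * (if cobdry s σ = 0 then 1 else 0)),
        Finset.prod_mul_distrib, Finset.prod_const, Finset.prod_boole]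
      congr 1
      simp [hmem s]
    have h2 : ∏ σ ∈ Fᶜ, ((1 - p) * (if σ ∈ F then 0 else 1) +
        p * (if σ ∈ F then 1 else 0) * (if cobdry s σ = 0 then 1 else 0)) =
        (1 - p) ^ (Fintype.card E - F.card) := by
      rw [Finset.prod_congr rfl (fun σ hσ => by
        rw [Finset.mem_compl] at hσ
        simp [hσ] : ∀ σ ∈ Fᶜ, ((1 - p) * (if σ ∈ F then 0 else 1) +
          p * (if σ ∈ F then 1 else 0) * (if cobdry s σ = 0 then 1 else 0)) =
          (1 - p)), Finset.prod_const, Finset.card_compl]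
    rw [h1, h2]; ring
  simp_rw [key, ← Finset.mul_sum]
  congr 1
  rw [Finset.sum_boole]
  have : (Finset.univ.filter (· ∈ S)).card = Fintype.card S := by
    rw [Fintype.card_subtype]
  rw [this, Module.card_eq_pow_finrank (K := ZMod q) (V := S), ZMod.card]
  push_cast
  ring
end
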